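/- Let {A_1,...,A_m} be a bimodal collection of disjoint subsets of an abelian group G with internal difference groups H_i, where indices 1 ≤ i ≤ r (r ≥ 2) are exactly those with |A_i| < |H_i|. Fix a_i ∈ A_i. Then for i, j ≤ r with i ≠ j, (a_i + H_i) ∩ (a_j + H_j) = (a_i + H_i) \ A_i. -/
import Mathlib


variable {G : Type*} [AddCommGroup G] [Fintype G]

/-- `N A i δ` counts the pairs `(a, b)` with `a ∈ A i`, `b ∈ A j` for some `j ≠ i`,
and `a - b = δ`. -/
noncomputable def bimodalCount {ι : Type*} (A : ι → Set G) (i : ι) (δ : G) : ℕ :=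
  {p : G × G | p.1 ∈ A i ∧ (∃ j, j ≠ i ∧ p.2 ∈ A j) ∧ p.1 - p.2 = δ}.ncard

/-- A collection of subsets has the bimodal property if every nonzero `δ` occurs as
an external difference out of `A i` either `0` or `|A i|` times. -/
def IsBimodal {ι : Type*} (A : ι → Set G) : Prop :=
  ∀ δ : G, δ ≠ 0 → ∀ i : ι,
    bimodalCount A i δ = 0 ∨ bimodalCount A i δ = (A i).ncard

/-- The internal difference group of a subset `X`: the subgroup generated by all
differences of elements of `X`. -/
def idg (X : Set G) : AddSubgroup G :=
  AddSubgroup.closure {d : G | ∃ x ∈ X, ∃ y ∈ X, x - y = d}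

/-- The union of the other blocks. -/
def Bset {ι : Type*} (A : ι → Set G) (k : ι) : Set G := {b | ∃ l, l ≠ k ∧ b ∈ A l}

lemma idg_mem_of_mem {X : Set G} {x y : G} (hx : x ∈ X) (hy : y ∈ X) :
    x - y ∈ idg X := AddSubgroup.subset_closure ⟨x, hx, y, hy, rfl⟩

/-- If the count of `δ` is nonzero, every element of `A k` has a partner realizing `δ`. -/
lemma count_all {ι : Type*} (A : ι → Set G) (hbim : IsBimodal A) (k : ι)
    {δ : G} (hδ : δ ≠ 0) {y b : G} (hy : y ∈ A k) (hb : ∃ l, l ≠ k ∧ b ∈ A l)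
    (hyb : y - b = δ) :
    ∀ x ∈ A k, ∃ b', (∃ l, l ≠ k ∧ b' ∈ A l) ∧ x - b' = δ := by
  intro x hx
  set S : Set (G × G) := {p : G × G | p.1 ∈ A k ∧ (∃ j, j ≠ k ∧ p.2 ∈ A j) ∧ p.1 - p.2 = δ}
    with hS
  have hmem : (y, b) ∈ S := ⟨hy, hb, hyb⟩
  have hSc : bimodalCount A k δ = S.ncard := rfl
  have hne : S.ncard ≠ 0 := ((Set.ncard_pos (Set.toFinite S)).mpr ⟨_, hmem⟩).ne'
  have hcount : S.ncard = (A k).ncard := by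
    rcases hbim δ hδ k with h | h
    · rw [hSc] at h; exact absurd h hne
    · rw [hSc] at h; exact h
  have hinj : Set.InjOn Prod.fst S := by
    rintro ⟨p1, p2⟩ ⟨hp1, _, hp3⟩ ⟨q1, q2⟩ ⟨hq1, _, hq3⟩ h
    simp only at h
    subst h
    have h2 : p1 - p2 = p1 - q2 := hp3.trans hq3.symm
    have : p2 = q2 := sub_right_injective h2
    simp [this]
  have himg : Prod.fst '' S ⊆ A k := by rintro _ ⟨p, hp, rfl⟩; exact hp.1
  have hcard : (Prod.fst '' S).ncard = (A k).ncard := by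
    rw [Set.ncard_image_of_injOn hinj, hcount]
  have heq : Prod.fst '' S = A k :=
    Set.eq_of_subset_of_ncard_le himg (le_of_eq hcard.symm) (Set.toFinite _)
  have hx' : x ∈ Prod.fst '' S := heq ▸ hx
  obtain ⟨p, hpS, hpx⟩ := hx'
  exact ⟨p.2, hpS.2.1, hpx ▸ hpS.2.2⟩

/-- `Bset A k` is invariant under translation by `idg (A k)`. -/
lemma shift_mem {ι : Type*} (A : ι → Set G)
    (hdisj : ∀ i j, i ≠ j → Disjoint (A i) (A j)) (hbim : IsBimodal A)
    (k : ι) :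
    ∀ g ∈ idg (A k), ∀ b ∈ Bset A k, b + g ∈ Bset A k := by
  intro g hg
  refine AddSubgroup.closure_induction
    (p := fun g _ => ∀ b ∈ Bset A k, b + g ∈ Bset A k) ?_ ?_ ?_ ?_ hg
  · rintro d ⟨x, hx, y, hy, rfl⟩ b hb
    obtain ⟨l, hlk, hbl⟩ := hb
    have hδ : (y : G) - b ≠ 0 := by
      rw [sub_ne_zero]
      rintro rfl
      exact Set.disjoint_left.mp (hdisj k l (Ne.symm hlk)) hy hbl
    obtain ⟨b', hb', hxb'⟩ := count_all A hbim k hδ hy ⟨l, hlk, hbl⟩ rfl x hx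
    have h2 : b' = x - (x - b') := by abel
    rw [hxb'] at h2
    have h3 : x - (y - b) = b + (x - y) := by abel
    rw [h3] at h2
    obtain ⟨l', hl'k, hb'l'⟩ := hb'
    exact ⟨l', hl'k, by rw [← h2]; exact hb'l'⟩
  · intro b hb; simpa using hb
  · intro g₁ g₂ _ _ h₁ h₂ b hb
    have := h₂ _ (h₁ b hb)
    rwa [add_assoc] at this
  · intro g _ hgood b hb
    have him : (· + g) '' Bset A k ⊆ Bset A k := by
      rintro _ ⟨b', hb', rfl⟩; exact hgood b' hb'
    have heq : (· + g) '' Bset A k = Bset A k :=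
      Set.eq_of_subset_of_ncard_le him
        (by rw [Set.ncard_image_of_injective _ (add_left_injective g)]) (Set.toFinite _)
    rw [← heq] at hb
    obtain ⟨b', hb', hbe⟩ := hb
    have : b + -g = b' := by rw [← hbe]; show b' + g + -g = b'; abel
    rw [this]; exact hb'

/-- The coset `a k + idg (A k)` misses every other block. -/
lemma coset_disj {ι : Type*} (A : ι → Set G)
    (hdisj : ∀ i j, i ≠ j → Disjoint (A i) (A j)) (hbim : IsBimodal A)
    (a : ι → G) (ha : ∀ i, a i ∈ A i)
    (k l : ι) (hlk : l ≠ k) {g : G} (hg : g ∈ idg (A k)) : a k + g ∉ A l := by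
  intro hmemAl
  have hB : a k + g ∈ Bset A k := ⟨l, hlk, hmemAl⟩
  obtain ⟨l', hl'k, hal'⟩ := shift_mem A hdisj hbim k (-g) (neg_mem hg) _ hB
  have heq : a k + g + -g = a k := by abel
  rw [heq] at hal'
  exact Set.disjoint_left.mp (hdisj k l' (Ne.symm hl'k)) (ha k) hal'

/-- With indices `i < r` (`r ≥ 2`) exactly those with `|A i| < |H i|`, for
`i ≠ j` below `r` the intersection of the cosets `a i + H i` and `a j + H j` equals
`(a i + H i) \ A i`. -/
theorem bimodal_star_intersection {m r : ℕ} (A : Fin m → Set G)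
    (hne : ∀ i, (A i).Nonempty)
    (hdisj : ∀ i j, i ≠ j → Disjoint (A i) (A j))
    (hbim : IsBimodal A)
    (hr : 2 ≤ r)
    (hlt : ∀ i : Fin m, (i : ℕ) < r ↔ (A i).ncard < Nat.card (idg (A i)))
    (a : Fin m → G) (ha : ∀ i, a i ∈ A i)
    (i j : Fin m) (hi : (i : ℕ) < r) (hj : (j : ℕ) < r) (hij : i ≠ j) :
    ((a i + ·) '' (idg (A i) : Set G)) ∩ ((a j + ·) '' (idg (A j) : Set G))
      = ((a i + ·) '' (idg (A i) : Set G)) \ A i := by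
  have himg : ∀ (k : Fin m) (x : G),
      x ∈ (a k + ·) '' (idg (A k) : Set G) ↔ x - a k ∈ idg (A k) := by
    intro k x
    constructor
    · rintro ⟨h, hh, rfl⟩
      simpa using hh
    · intro h
      exact ⟨x - a k, h, by show a k + (x - a k) = x; abel⟩
  ext x
  constructor
  · rintro ⟨hxi, hxj⟩
    refine ⟨hxi, ?_⟩
    intro hxAi
    have hgj : x - a j ∈ idg (A j) := (himg j x).mp hxj
    have := coset_disj A hdisj hbim a ha j i hij hgj
    rw [show a j + (x - a j) = x by abel] at this
    exact this hxAi
  · rintro ⟨hxi, hxnAi⟩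
    have hgi : x - a i ∈ idg (A i) := (himg i x).mp hxi
    refine ⟨hxi, ?_⟩
    rw [himg j x]
    -- find h ∈ H j \ H i
    have hex : ∃ h, h ∈ idg (A j) ∧ h ∉ idg (A i) := by
      by_contra hc
      push_neg at hc
      have hsub : ((a j + ·) '' (idg (A j) : Set G)) ⊆ A j := by
        rintro _ ⟨g, hg, rfl⟩
        show a j + g ∈ A j
        have hg' : g ∈ idg (A j) := by simpa using hg
        have hBj : (a j : G) ∈ Bset A i := ⟨j, hij.symm, ha j⟩
        obtain ⟨l, hli, hl⟩ := shift_mem A hdisj hbim i g (hc g hg') _ hBj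
        by_cases hlj : l = j
        · subst hlj; exact hl
        · exact absurd hl (coset_disj A hdisj hbim a ha j l hlj hg')
      have hcard : Nat.card (idg (A j)) ≤ (A j).ncard := by
        calc Nat.card (idg (A j)) = ((idg (A j) : Set G)).ncard := by
              rw [← SetLike.coe_sort_coe, Nat.card_coe_set_eq]
          _ = ((a j + ·) '' (idg (A j) : Set G)).ncard :=
              (Set.ncard_image_of_injective _ (add_right_injective (a j))).symm
          _ ≤ (A j).ncard := Set.ncard_le_ncard hsub (Set.toFinite _)
      have := (hlt j).mp hj
      omega
    obtain ⟨h, hhj, hhi⟩ := hex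
    -- a i + h lies in the union, outside A i
    have hBi1 : (a i + h) ∈ Bset A j :=
      shift_mem A hdisj hbim j h hhj _ ⟨i, hij, ha i⟩
    have hnotAi : a i + h ∉ A i := by
      intro hmem
      have h1 : (a i + h) - a i ∈ idg (A i) := idg_mem_of_mem hmem (ha i)
      rw [show a i + h - a i = h by abel] at h1
      exact hhi h1
    have hBi2 : (a i + h) ∈ Bset A i := by
      obtain ⟨l, hlj, hl⟩ := hBi1
      refine ⟨l, ?_, hl⟩
      rintro rfl
      exact hnotAi hl
    have hxh : x + h ∈ Bset A i := by
      have := shift_mem A hdisj hbim i (x - a i) hgi _ hBi2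
      rwa [show a i + h + (x - a i) = x + h by abel] at this
    by_contra hcj
    obtain ⟨l, hli, hl⟩ := hxh
    have hlj : l ≠ j := by
      intro hlje
      rw [hlje] at hl
      have h1 : (x + h) - a j ∈ idg (A j) := idg_mem_of_mem hl (ha j)
      have h2 : x - a j = ((x + h) - a j) - h := by abel
      rw [h2] at hcj
      exact hcj (sub_mem h1 hhj)
    obtain ⟨l', hl'j, hl'⟩ := shift_mem A hdisj hbim j (-h) (neg_mem hhj) _ ⟨l, hlj, hl⟩
    rw [show x + h + -h = x by abel] at hl'
    by_cases hl'i : l' = i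
    · subst hl'i; exact hxnAi hl'
    · have := coset_disj A hdisj hbim a ha i l' hl'i hgi
      rw [show a i + (x - a i) = x by abel] at this
      exact this hl'
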